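/- If f : X → Y is a surjective *-continuous map and X is connected, then Y is connected. -/

import Mathlib

/-!
Clopen sets are regular open, hence *-open, and *-open sets are open. So a *-continuous map
pulls clopen sets back to clopen sets, and connectedness only sees clopen sets.
-/

open Set TopologicalSpace

def RegOpen (X : Type*) [TopologicalSpace X] (U : Set X) : Prop :=
  interior (closure U) = U

def starInt (X : Type*) [TopologicalSpace X] (A : Set X) : Set X :=
  {x | x ∈ A ∧ ∃ W, RegOpen X W ∧ x ∈ W ∧ W ⊆ A}

def starCl (X : Type*) [TopologicalSpace X] (A : Set X) : Set X :=
  {x | ∀ W, RegOpen X W → x ∈ W → (W ∩ A).Nonempty}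

def StarOpen (X : Type*) [TopologicalSpace X] (A : Set X) : Prop :=
  ∀ x ∈ A, ∃ W, RegOpen X W ∧ x ∈ W ∧ W ⊆ A

def starTop (X : Type*) [TopologicalSpace X] : TopologicalSpace X :=
  TopologicalSpace.generateFrom {A | StarOpen X A}

def StarContinuous {X Y : Type*} [TopologicalSpace X] [TopologicalSpace Y] (f : X → Y) : Prop :=
  ∀ A : Set Y, StarOpen Y A → StarOpen X (f ⁻¹' A)

theorem RegOpen.isOpen {X : Type*} [TopologicalSpace X] {U : Set X} (hU : RegOpen X U) :
    IsOpen U :=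
  hU ▸ isOpen_interior

theorem IsClopen.regOpen {X : Type*} [TopologicalSpace X] {U : Set X} (hU : IsClopen U) :
    RegOpen X U := by
  rw [RegOpen, hU.isClosed.closure_eq, hU.isOpen.interior_eq]

theorem StarOpen.isOpen {X : Type*} [TopologicalSpace X] {A : Set X} (hA : StarOpen X A) :
    IsOpen A := by
  refine isOpen_iff_forall_mem_open.mpr fun x hx => ?_
  obtain ⟨W, hW, hxW, hWA⟩ := hA x hx
  exact ⟨W, hWA, hW.isOpen, hxW⟩

theorem IsClopen.starOpen {X : Type*} [TopologicalSpace X] {U : Set X} (hU : IsClopen U) :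
    StarOpen X U :=
  fun _ hx => ⟨U, hU.regOpen, hx, subset_rfl⟩

theorem StarContinuous.isClopen_preimage {X Y : Type*} [TopologicalSpace X] [TopologicalSpace Y]
    {f : X → Y} (hf : StarContinuous f) {U : Set Y} (hU : IsClopen U) : IsClopen (f ⁻¹' U) :=
  ⟨isOpen_compl_iff.mp (hf _ hU.compl.starOpen).isOpen, (hf U hU.starOpen).isOpen⟩

theorem Function.Surjective.connectedSpace_of_isClopen_preimage {X Y : Type*}
    [TopologicalSpace X] [TopologicalSpace Y] [ConnectedSpace X] {f : X → Y}
    (hf : Function.Surjective f) (hclopen : ∀ U : Set Y, IsClopen U → IsClopen (f ⁻¹' U)) :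
    ConnectedSpace Y := by
  refine connectedSpace_iff_clopen.mpr ⟨.map f ConnectedSpace.toNonempty, fun U hU => ?_⟩
  rcases isClopen_iff.mp (hclopen U hU) with h | h
  · exact .inl (hf.preimage_injective (h.trans preimage_empty.symm))
  · exact .inr (hf.preimage_injective (h.trans preimage_univ.symm))

theorem stmt18 {X Y : Type*} [TopologicalSpace X] [TopologicalSpace Y]
    (f : X → Y) (hf : Function.Surjective f) (hc : StarContinuous f)
    (hX : ConnectedSpace X) : ConnectedSpace Y :=
  hf.connectedSpace_of_isClopen_preimage fun _ => hc.isClopen_preimage
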